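/- arXiv:2109.10280 — 9 statements merged into one kernel-verified Lean document; each statement's English description precedes it below -/
import Mathlib

section
/- Let X be a set, 𝒰 a family of subsets of X, and A₁, A₂ ⊆ X. Then st(A₁ ∩ A₂, 𝒰) ∩ st((A₁ ∩ A₂)ᶜ, 𝒰) ⊆ (st(A₁, 𝒰) ∩ st(A₁ᶜ, 𝒰)) ∪ (st(A₂, 𝒰) ∩ st(A₂ᶜ, 𝒰)). -/
open Set

/-- The star of a set `A` with respect to a family `𝒰` of subsets of `X`:
the union of all members of `𝒰` meeting `A`. -/
def star' {X : Type*} (𝒰 : Set (Set X)) (A : Set X) : Set X :=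
  ⋃₀ {U | U ∈ 𝒰 ∧ (U ∩ A).Nonempty}

lemma star'_mono {X : Type*} (𝒰 : Set (Set X)) {A B : Set X} (h : A ⊆ B) :
    star' 𝒰 A ⊆ star' 𝒰 B := by
  rintro x ⟨U, ⟨hU, y, hyU, hyA⟩, hxU⟩
  exact ⟨U, ⟨hU, y, hyU, h hyA⟩, hxU⟩

theorem star_inter_compl_subset {X : Type*} (𝒰 : Set (Set X)) (A₁ A₂ : Set X) :
    star' 𝒰 (A₁ ∩ A₂) ∩ star' 𝒰 (A₁ ∩ A₂)ᶜ ⊆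
      (star' 𝒰 A₁ ∩ star' 𝒰 A₁ᶜ) ∪ (star' 𝒰 A₂ ∩ star' 𝒰 A₂ᶜ) := by
  rintro x ⟨hx1, U, ⟨hU, y, hyU, hyc⟩, hxU⟩
  rcases not_and_or.mp hyc with h | h
  · exact Or.inl ⟨star'_mono 𝒰 inter_subset_left hx1,
      ⟨U, ⟨hU, y, hyU, h⟩, hxU⟩⟩
  · exact Or.inr ⟨star'_mono 𝒰 inter_subset_right hx1,
      ⟨U, ⟨hU, y, hyU, h⟩, hxU⟩⟩
end

section
/- Let G be a group and ℬ a bornology on G, i.e. a collection of subsets of G containing all singletons and closed under taking subsets and finite unions. Then ℬ is stable under pointwise products (B₁·B₂ ∈ ℬ whenever B₁, B₂ ∈ ℬ) and inverses (B⁻¹ ∈ ℬ whenever B ∈ ℬ) if and only if for all nonempty B₁, B₂ ∈ ℬ the set (B₁·B₂⁻¹)·B₂ belongs to ℬ. -/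
open Set Pointwise

theorem bornology_group_compatible_iff {G : Type*} [Group G] (ℬ : Set (Set G))
    (hsingle : ∀ g : G, {g} ∈ ℬ)
    (hsubset : ∀ S T : Set G, S ⊆ T → T ∈ ℬ → S ∈ ℬ)
    (hunion : ∀ S ∈ ℬ, ∀ T ∈ ℬ, S ∪ T ∈ ℬ) :
    ((∀ B₁ ∈ ℬ, ∀ B₂ ∈ ℬ, B₁ * B₂ ∈ ℬ) ∧ (∀ B ∈ ℬ, B⁻¹ ∈ ℬ)) ↔
      (∀ B₁ ∈ ℬ, ∀ B₂ ∈ ℬ, B₁.Nonempty → B₂.Nonempty → (B₁ * B₂⁻¹) * B₂ ∈ ℬ) := by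
  constructor
  · rintro ⟨hmul, hinv⟩ B₁ hB₁ B₂ hB₂ _ _
    exact hmul _ (hmul _ hB₁ _ (hinv _ hB₂)) _ hB₂
  · intro hC
    have hempty : (∅ : Set G) ∈ ℬ := hsubset _ _ (empty_subset _) (hsingle 1)
    have hinv : ∀ B ∈ ℬ, B⁻¹ ∈ ℬ := by
      intro B hB
      have h1 : B ∪ {1} ∈ ℬ := hunion B hB {1} (hsingle 1)
      have h2 := hC {1} (hsingle 1) (B ∪ {1}) h1 ⟨1, rfl⟩ ⟨1, Or.inr rfl⟩
      refine hsubset _ _ ?_ h2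
      intro x hx
      have : (1 : G) * x * 1 ∈ ({1} * (B ∪ {1})⁻¹) * (B ∪ {1}) := by
        refine mul_mem_mul (mul_mem_mul rfl ?_) (Or.inr rfl)
        rw [Set.mem_inv]
        exact Or.inl (Set.mem_inv.mp hx)
      simpa using this
    refine ⟨?_, hinv⟩
    intro B₁ hB₁ B₂ hB₂
    rcases B₁.eq_empty_or_nonempty with rfl | hne₁
    · simpa using hempty
    rcases B₂.eq_empty_or_nonempty with rfl | hne₂
    · simpa using hempty
    have hT : B₂⁻¹ ∪ {1} ∈ ℬ := hunion _ (hinv _ hB₂) _ (hsingle 1)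
    have h := hC B₁ hB₁ _ hT hne₁ ⟨1, Or.inr rfl⟩
    refine hsubset _ _ ?_ h
    rintro x hx
    obtain ⟨b₁, hb₁, b₂, hb₂, rfl⟩ := hx
    have : b₁ * b₂ * 1 ∈ (B₁ * (B₂⁻¹ ∪ {1})⁻¹) * (B₂⁻¹ ∪ {1}) := by
      refine mul_mem_mul (mul_mem_mul hb₁ ?_) (Or.inr rfl)
      rw [Set.mem_inv]
      exact Or.inl (Set.inv_mem_inv.mpr hb₂)
    simpa using this
end

section
/- Let G be a large scale group with bornology ℬ. The following are equivalent: (i) for every bounded B ∈ ℬ there exist a bounded C ∈ ℬ and a partition 𝒫 of G into pairwise disjoint sets such that every member of 𝒫 is contained in some left translate g·C and every left translate g·B (g ∈ G) is contained in a single member of 𝒫; (ii) for every bounded B ∈ ℬ, the subgroup ⟨B⟩ of G generated by B is bounded. (Condition (i) says that G has asymptotic dimension 0.) -/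
open Set Pointwise

theorem asdim_zero_iff_locally_bounded {G : Type*} [Group G] (ℬ : Set (Set G))
    (hsingle : ∀ g : G, {g} ∈ ℬ)
    (hsubset : ∀ S T : Set G, S ⊆ T → T ∈ ℬ → S ∈ ℬ)
    (hunion : ∀ S ∈ ℬ, ∀ T ∈ ℬ, S ∪ T ∈ ℬ)
    (hmul : ∀ S ∈ ℬ, ∀ T ∈ ℬ, S * T ∈ ℬ)
    (hinv : ∀ S ∈ ℬ, S⁻¹ ∈ ℬ) :
    (∀ B ∈ ℬ, ∃ C ∈ ℬ, ∃ P : Set (Set G),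
        ⋃₀ P = Set.univ ∧ P.PairwiseDisjoint id ∧
        (∀ Q ∈ P, ∃ g : G, Q ⊆ g • C) ∧
        (∀ g : G, ∃ Q ∈ P, g • B ⊆ Q)) ↔
      (∀ B ∈ ℬ, ((Subgroup.closure B : Subgroup G) : Set G) ∈ ℬ) := by
  constructor
  · intro h B hB
    -- enlarge B to B' = B ∪ B⁻¹ ∪ {1}
    set B' : Set G := (B ∪ B⁻¹) ∪ {1} with hB'def
    have hB' : B' ∈ ℬ := hunion _ (hunion _ hB _ (hinv _ hB)) _ (hsingle 1)
    have h1B' : (1 : G) ∈ B' := Or.inr rfl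
    obtain ⟨C, hC, P, hcover, hdisj, hsub, htrans⟩ := h B' hB'
    obtain ⟨Q₀, hQ₀P, hQ₀⟩ := htrans 1
    rw [one_smul] at hQ₀
    have h1Q₀ : (1 : G) ∈ Q₀ := hQ₀ h1B'
    -- Q₀ is closed under right multiplication by B'
    have step : ∀ y ∈ Q₀, ∀ x ∈ B', y * x ∈ Q₀ := by
      intro y hy x hx
      obtain ⟨Q, hQP, hQ⟩ := htrans y
      have hyQ : y ∈ Q := hQ ⟨1, h1B', by simp⟩
      have hQeq : Q = Q₀ := by
        by_contra hne
        exact (hdisj hQP hQ₀P hne).le_bot ⟨hyQ, hy⟩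
      rw [← hQeq]
      exact hQ ⟨x, hx, rfl⟩
    -- closure B ⊆ Q₀
    have hclQ : ((Subgroup.closure B : Subgroup G) : Set G) ⊆ Q₀ := by
      intro x hx
      have hx' : x ∈ Submonoid.closure (B ∪ B⁻¹) := by
        rw [← Subgroup.closure_toSubmonoid]; exact hx
      clear hx
      induction hx' using Submonoid.closure_induction_right with
      | one => exact h1Q₀
      | mul_right y hy z hz ih => exact step y ih z (Or.inl hz)
    obtain ⟨g, hg⟩ := hsub Q₀ hQ₀P
    have : g • C ∈ ℬ := by
      have := hmul _ (hsingle g) _ hC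
      rwa [Set.singleton_mul] at this
    exact hsubset _ _ (hclQ.trans hg) this
  · intro h B hB
    set H := Subgroup.closure B with hHdef
    refine ⟨(H : Set G), h B hB, Set.range (fun g : G => g • (H : Set G)), ?_, ?_, ?_, ?_⟩
    · ext x
      simp only [Set.mem_sUnion, Set.mem_range, Set.mem_univ, iff_true]
      exact ⟨x • (H : Set G), ⟨x, rfl⟩, ⟨1, H.one_mem, by simp⟩⟩
    · rintro _ ⟨g₁, rfl⟩ _ ⟨g₂, rfl⟩ hne
      refine Set.disjoint_left.2 fun x hx₁ hx₂ => hne ?_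
      simp only [id] at *
      obtain ⟨a, ha, rfl⟩ := hx₁
      obtain ⟨b, hb, hba⟩ := hx₂
      rw [leftCoset_eq_iff]
      have hba' : g₂ * b = g₁ * a := hba
      have : g₁⁻¹ * g₂ = a * b⁻¹ := by
        calc g₁⁻¹ * g₂ = g₁⁻¹ * (g₂ * b) * b⁻¹ := by group
        _ = g₁⁻¹ * (g₁ * a) * b⁻¹ := by rw [hba']
        _ = a * b⁻¹ := by group
      rw [this]; exact H.mul_mem ha (H.inv_mem hb)
    · rintro _ ⟨g, rfl⟩
      exact ⟨g, subset_rfl⟩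
    · intro g
      exact ⟨g • (H : Set G), ⟨g, rfl⟩, Set.smul_set_mono (Subgroup.subset_closure)⟩
end

section
/- Let G be a Hausdorff locally compact topological group and K a symmetric neighborhood of the identity 1 in G that generates G as a group. Then for every subset L of G with compact closure, G \ L has only finitely many K⁴-components; that is, there is a finite subset S of G \ L such that every element of G \ L is joined to some element of S by a K⁴-chain in G \ L. -/
/-!
Cover the compact set `closure L` by finitely many translates `g • K`. A `K`-chain in `G`
from `x ∉ L` to a point of `L` stays in `Lᶜ` up to a last point `e ∉ L`, and
`e ∈ L * K ⊆ g • (K * K)` for some `g`. Choosing one point of `Lᶜ` in each `g • (K * K)`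
that meets `Lᶜ`, the point `e` is a single `K⁴`-step away from the point chosen for its `g`.
-/

open Set Pointwise

/-- One step of a `K`-chain inside the set `A`. -/
def KStep {G : Type*} [Group G] (K A : Set G) (x y : G) : Prop :=
  x ∈ A ∧ y ∈ A ∧ x⁻¹ * y ∈ K

/-- `x` and `y` are joined by a `K`-chain inside `A`. -/
def KConn {G : Type*} [Group G] (K A : Set G) (x y : G) : Prop :=
  Relation.ReflTransGen (KStep K A) x y

namespace KConn

variable {G : Type*} [Group G] {K K' A : Set G} {x y : G}

lemma mono (hKK' : K ⊆ K') (h : KConn K A x y) : KConn K' A x y :=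
  Relation.ReflTransGen.mono (fun _ _ hs => ⟨hs.1, hs.2.1, hKK' hs.2.2⟩) _ _ h

lemma symm (hK : K⁻¹ = K) (h : KConn K A x y) : KConn K A y x := by
  induction h with
  | refl => exact .refl
  | tail _ hbc ih => exact .head ⟨hbc.2.1, hbc.1, by rw [← hK]; simpa using hbc.2.2⟩ ih

lemma mul_left (g : G) (h : KConn K univ x y) : KConn K univ (g * x) (g * y) :=
  Relation.ReflTransGen.lift (g * ·)
    (fun _ _ ⟨_, _, hab⟩ => ⟨trivial, trivial, by simpa [mul_assoc] using hab⟩) _ _ h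

lemma of_closure_eq_top (hK : K⁻¹ = K) (hgen : Subgroup.closure K = ⊤) (x y : G) :
    KConn K univ x y := by
  suffices h : ∀ g, KConn K univ 1 g by simpa using (h (x⁻¹ * y)).mul_left x
  intro g
  induction hgen ▸ Subgroup.mem_top g using Subgroup.closure_induction with
  | mem k hk => exact .single ⟨trivial, trivial, by simpa using hk⟩
  | one => exact .refl
  | mul a b _ _ ha hb =>
    have hab := hb.mul_left a
    rw [mul_one] at hab
    exact ha.trans hab
  | inv a _ ha => exact symm hK (by simpa using ha.mul_left a⁻¹)

lemma exists_kConn_compl_mem_mul_inv {L : Set G} (h : KConn K univ x y) (hx : x ∉ L)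
    (hy : y ∈ L) : ∃ e ∈ Lᶜ ∩ (L * K⁻¹), KConn K Lᶜ x e := by
  induction h using Relation.ReflTransGen.head_induction_on with
  | refl => exact absurd hy hx
  | @head a b hab _ ih =>
    by_cases hb : b ∈ L
    · exact ⟨a, ⟨hx, b, hb, b⁻¹ * a, by simpa using hab.2.2, by group⟩, .refl⟩
    · obtain ⟨e, he, hbe⟩ := ih hb
      exact ⟨e, he, .head ⟨hx, hb, hab.2.2⟩ hbe⟩

end KConn

lemma exists_finset_forall_inv_mul_mem {G : Type*} [Group G] {N B : Set G} (t : Finset G)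
    (hN : N ⊆ t * B) :
    ∃ S : Finset G, (S : Set G) ⊆ N ∧ ∀ e ∈ N, ∃ s ∈ S, s⁻¹ * e ∈ B⁻¹ * B := by
  classical
  let rep (g : G) : G := Classical.epsilon (· ∈ N ∩ g • B)
  refine ⟨(t.filter fun g => (N ∩ g • B).Nonempty).image rep, ?_, fun e he => ?_⟩
  · intro s hs
    simp only [Finset.coe_image, Finset.coe_filter, mem_image, mem_ofPred_eq] at hs
    obtain ⟨g, ⟨-, hg⟩, rfl⟩ := hs
    exact (Classical.epsilon_spec hg).1
  · obtain ⟨g, hg, b, hb, rfl⟩ := hN he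
    have hne : (N ∩ g • B).Nonempty := ⟨g * b, he, smul_mem_smul_set hb⟩
    obtain ⟨-, b', hb', hrep⟩ := Classical.epsilon_spec hne
    refine ⟨rep g, Finset.mem_image_of_mem _ (Finset.mem_filter.2 ⟨hg, hne⟩), ?_⟩
    rw [show rep g = g * b' from hrep.symm, mul_inv_rev, mul_assoc, inv_mul_cancel_left]
    exact mul_mem_mul (inv_mem_inv.2 hb') hb

theorem exists_finset_kConn_pow_four_of_subset_mul {G : Type*} [Group G] {K L : Set G}
    (h1 : 1 ∈ K) (hK : K⁻¹ = K) (hgen : Subgroup.closure K = ⊤) {t : Finset G}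
    (hL : L ⊆ t * K) :
    ∃ S : Finset G, (S : Set G) ⊆ Lᶜ ∧ ∀ x ∈ Lᶜ, ∃ s ∈ S, KConn (K ^ 4) Lᶜ s x := by
  have hK4 : K ⊆ K ^ 4 := subset_pow h1 four_ne_zero
  rcases L.eq_empty_or_nonempty with rfl | ⟨l, hl⟩
  · refine ⟨{1}, by simp, fun x _ => ⟨1, Finset.mem_singleton_self 1, ?_⟩⟩
    simpa using (KConn.of_closure_eq_top hK hgen 1 x).mono hK4
  have hN : Lᶜ ∩ (L * K⁻¹) ⊆ t * (K * K) := by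
    rw [hK, ← mul_assoc]
    exact inter_subset_right.trans (mul_subset_mul_right hL)
  obtain ⟨S, hSN, hS⟩ := exists_finset_forall_inv_mul_mem t hN
  refine ⟨S, hSN.trans inter_subset_left, fun x hx => ?_⟩
  obtain ⟨e, he, hxe⟩ :=
    (KConn.of_closure_eq_top hK hgen x l).exists_kConn_compl_mem_mul_inv hx hl
  obtain ⟨s, hsS, hse⟩ := hS e he
  have hK4eq : (K * K)⁻¹ * (K * K) = K ^ 4 := by
    rw [mul_inv_rev, hK]; simp only [pow_succ, pow_zero, one_mul, mul_assoc]
  exact ⟨s, hsS, .head ⟨(hSN hsS).1, he.1, hK4eq ▸ hse⟩ ((hxe.symm hK).mono hK4)⟩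

lemma IsCompact.exists_finset_subset_mul {G : Type*} [Group G] [TopologicalSpace G]
    [ContinuousMul G] {K L : Set G} (hL : IsCompact L) (hK : K ∈ nhds 1) :
    ∃ t : Finset G, L ⊆ t * K := by
  obtain ⟨t, -, ht⟩ := hL.elim_nhds_subcover (· • K) fun g _ => by
    simpa using smul_mem_nhds_smul g hK
  exact ⟨t, ht.trans_eq iUnion_mul_left_image⟩

theorem locally_compact_group_finitely_many_K4_components_general
    {G : Type*} [Group G] [TopologicalSpace G] [IsTopologicalGroup G]
    (K : Set G) (hKnhds : K ∈ nhds (1 : G)) (hKsymm : K⁻¹ = K)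
    (hKgen : Subgroup.closure K = ⊤)
    (L : Set G) (hL : IsCompact (closure L)) :
    ∃ S : Finset G, (S : Set G) ⊆ Lᶜ ∧
      ∀ x ∈ Lᶜ, ∃ s ∈ S, KConn (K ^ 4) Lᶜ s x := by
  obtain ⟨t, ht⟩ := hL.exists_finset_subset_mul hKnhds
  exact exists_finset_kConn_pow_four_of_subset_mul (mem_of_mem_nhds hKnhds) hKsymm hKgen
    (subset_closure.trans ht)

theorem locally_compact_group_finitely_many_K4_components
    {G : Type*} [Group G] [TopologicalSpace G] [IsTopologicalGroup G]
    [T2Space G] [LocallyCompactSpace G]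
    (K : Set G) (hKnhds : K ∈ nhds (1 : G)) (hKsymm : K⁻¹ = K)
    (hKgen : Subgroup.closure K = ⊤)
    (L : Set G) (hL : IsCompact (closure L)) :
    ∃ S : Finset G, (S : Set G) ⊆ Lᶜ ∧
      ∀ x ∈ Lᶜ, ∃ s ∈ S, KConn (K ^ 4) Lᶜ s x :=
  locally_compact_group_finitely_many_K4_components_general K hKnhds hKsymm hKgen L hL
end

section
/- Let G be a large scale group with bornology ℬ. The following are equivalent: (a) ℬ has a countable basis, i.e. there is a sequence (B_n)_{n≥1} in ℬ such that every member of ℬ is contained in some B_n; (b) there is a left-invariant metric d on G (d(g·x, g·y) = d(x, y) for all g, x, y ∈ G) such that for every subset A of G, A ∈ ℬ if and only if A has finite d-diameter. -/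
open Set Pointwise

section Aux

variable {G : Type*} [Group G]

/-- Words over a weighted family of generating sets. `RelW D g w` means `g` is a product of
elements of the `D n`'s of total weight (each generator from `D n` counting `n + 1`) equal to
`w`. -/
inductive RelW (D : ℕ → Set G) : G → ℕ → Prop
  | one : RelW D 1 0
  | step {g : G} {w : ℕ} {x : G} {n : ℕ} : RelW D g w → x ∈ D n → RelW D (g * x) (w + n + 1)

lemma RelW.prepend {D : ℕ → Set G} {g : G} {w : ℕ} (h : RelW D g w) :
    ∀ {x : G} {n : ℕ}, x ∈ D n → RelW D (x * g) (w + n + 1) := by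
  induction h with
  | one => intro x n hx; simpa using (RelW.one).step hx
  | step hg hy ih =>
    intro x n hx
    rename_i g' w' y m
    have h2 := (ih hx).step hy
    rw [show w' + m + 1 + n + 1 = w' + n + 1 + m + 1 from by omega]
    simpa [mul_assoc] using h2

lemma RelW.mul {D : ℕ → Set G} {g h : G} {w v : ℕ} (hg : RelW D g w) (hh : RelW D h v) :
    RelW D (g * h) (w + v) := by
  induction hh with
  | one => simpa using hg
  | step hh' hx ih =>
    rename_i h' v' x n
    rw [show w + (v' + n + 1) = w + v' + n + 1 from by omega, ← mul_assoc]
    exact ih.step hx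

lemma RelW.inv {D : ℕ → Set G} (hsym : ∀ n, ∀ x ∈ D n, x⁻¹ ∈ D n)
    {g : G} {w : ℕ} (h : RelW D g w) : RelW D g⁻¹ w := by
  induction h with
  | one => simpa using RelW.one (D := D)
  | step hg hx ih =>
    rename_i g' w' x n
    rw [mul_inv_rev]
    exact ih.prepend (hsym n x hx)

lemma relW_zero {D : ℕ → Set G} {g : G} (h : RelW D g 0) : g = 1 := by
  cases h with
  | one => rfl

/-- Union of `{1}` and the first `m` generating sets. -/
def EW (D : ℕ → Set G) : ℕ → Set G
  | 0 => {1}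
  | m + 1 => EW D m ∪ D m

lemma one_mem_EW (D : ℕ → Set G) (m : ℕ) : (1 : G) ∈ EW D m := by
  induction m with
  | zero => simp [EW]
  | succ m ih => exact Or.inl ih

lemma EW_mono (D : ℕ → Set G) {a b : ℕ} (h : a ≤ b) : EW D a ⊆ EW D b := by
  induction b with
  | zero => simp [Nat.le_zero.mp h]
  | succ b ih =>
    rcases Nat.lt_or_ge a (b + 1) with h' | h'
    · exact (ih (Nat.lt_succ_iff.mp h')).trans (subset_union_left)
    · rw [Nat.le_antisymm h h']

lemma D_subset_EW (D : ℕ → Set G) {n m : ℕ} (h : n < m) : D n ⊆ EW D m :=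
  (subset_union_right (s := EW D n)).trans (EW_mono D h)

lemma RelW.mem_pow {D : ℕ → Set G} {g : G} {w : ℕ} (h : RelW D g w) :
    g ∈ EW D w ^ w := by
  induction h with
  | one => simp
  | step hg hx ih =>
    rename_i g' w' x n
    have h1 : g' ∈ EW D (w' + n + 1) ^ w' :=
      Set.pow_subset_pow (EW_mono D (by omega)) (one_mem_EW D _) le_rfl ih
    have h2 : x ∈ EW D (w' + n + 1) := D_subset_EW D (by omega) hx
    have : g' * x ∈ EW D (w' + n + 1) ^ w' * EW D (w' + n + 1) :=
      Set.mul_mem_mul h1 h2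
    rw [← pow_succ] at this
    exact Set.pow_subset_pow_right (one_mem_EW D _) (by omega) this

end Aux

theorem countable_basis_iff_left_invariant_metric {G : Type*} [Group G] (ℬ : Set (Set G))
    (hsingle : ∀ g : G, {g} ∈ ℬ)
    (hsubset : ∀ S T : Set G, S ⊆ T → T ∈ ℬ → S ∈ ℬ)
    (hunion : ∀ S ∈ ℬ, ∀ T ∈ ℬ, S ∪ T ∈ ℬ)
    (hmul : ∀ S ∈ ℬ, ∀ T ∈ ℬ, S * T ∈ ℬ)
    (hinv : ∀ S ∈ ℬ, S⁻¹ ∈ ℬ) :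
    (∃ Bs : ℕ → Set G, (∀ n, Bs n ∈ ℬ) ∧ ∀ A ∈ ℬ, ∃ n, A ⊆ Bs n) ↔
      (∃ d : G → G → ℝ,
        (∀ x y, 0 ≤ d x y) ∧
        (∀ x y, d x y = 0 ↔ x = y) ∧
        (∀ x y, d x y = d y x) ∧
        (∀ x y z, d x z ≤ d x y + d y z) ∧
        (∀ g x y, d (g * x) (g * y) = d x y) ∧
        (∀ A : Set G, A ∈ ℬ ↔ ∃ r : ℝ, ∀ x ∈ A, ∀ y ∈ A, d x y ≤ r)) := by
  constructor
  · rintro ⟨Bs, hBmem, hBbasis⟩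
    -- symmetric generating sets
    set D : ℕ → Set G := fun n => Bs n ∪ (Bs n)⁻¹ with hD
    have hDmem : ∀ n, D n ∈ ℬ := fun n => hunion _ (hBmem n) _ (hinv _ (hBmem n))
    have hDsym : ∀ n, ∀ x ∈ D n, x⁻¹ ∈ D n := by
      rintro n x (hx | hx)
      · exact Or.inr (by simpa using hx)
      · exact Or.inl (by simpa using hx)
    -- every element appears
    have hne : ∀ g : G, {w | RelW D g w}.Nonempty := by
      intro g
      obtain ⟨n, hn⟩ := hBbasis {g} (hsingle g)
      have : g ∈ D n := Or.inl (hn rfl)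
      exact ⟨0 + n + 1, by simpa using (RelW.one).step this⟩
    set ℓ : G → ℕ := fun g => sInf {w | RelW D g w} with hℓ
    have hℓmem : ∀ g, RelW D g (ℓ g) := fun g => Nat.sInf_mem (hne g)
    have hℓle : ∀ {g w}, RelW D g w → ℓ g ≤ w := fun h => Nat.sInf_le h
    have hℓone : ℓ 1 = 0 := Nat.le_zero.mp (hℓle RelW.one)
    have hℓeq : ∀ g, ℓ g = 0 → g = 1 := by
      intro g h0
      have := hℓmem g
      rw [h0] at this
      exact relW_zero this
    have hℓinv : ∀ g, ℓ g⁻¹ = ℓ g := by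
      have key : ∀ g : G, ℓ g⁻¹ ≤ ℓ g := fun g => hℓle ((hℓmem g).inv hDsym)
      intro g
      refine le_antisymm (key g) ?_
      simpa using key g⁻¹
    have hℓmul : ∀ g h : G, ℓ (g * h) ≤ ℓ g + ℓ h :=
      fun g h => hℓle ((hℓmem g).mul (hℓmem h))
    -- bounded level sets
    have hEmem : ∀ m, EW D m ∈ ℬ := by
      intro m
      induction m with
      | zero => exact hsingle 1
      | succ m ih => exact hunion _ ih _ (hDmem m)
    have hpowmem : ∀ (S : Set G), S ∈ ℬ → ∀ k : ℕ, S ^ k ∈ ℬ := by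
      intro S hS k
      induction k with
      | zero => exact hsubset _ {1} (by simp) (hsingle 1)
      | succ k ih => rw [pow_succ]; exact hmul _ ih _ hS
    refine ⟨fun x y => (ℓ (x⁻¹ * y) : ℝ), fun x y => by positivity, ?_, ?_, ?_, ?_, ?_⟩
    · intro x y
      dsimp only
      constructor
      · intro h
        have h0 : ℓ (x⁻¹ * y) = 0 := by exact_mod_cast h
        have := hℓeq _ h0
        rwa [inv_mul_eq_one] at this
      · rintro rfl; simp [hℓone]
    · intro x y
      dsimp only
      have : (y⁻¹ * x) = (x⁻¹ * y)⁻¹ := by group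
      rw [this, hℓinv]
    · intro x y z
      dsimp only
      have h1 : ℓ (x⁻¹ * z) ≤ ℓ (x⁻¹ * y) + ℓ (y⁻¹ * z) := by
        have := hℓmul (x⁻¹ * y) (y⁻¹ * z)
        rwa [show (x⁻¹ * y) * (y⁻¹ * z) = x⁻¹ * z from by group] at this
      exact_mod_cast h1
    · intro g x y
      dsimp only
      rw [show (g * x)⁻¹ * (g * y) = x⁻¹ * y from by group]
    · intro A
      constructor
      · intro hA
        obtain ⟨n, hAn⟩ := hBbasis A hA
        refine ⟨((2 * n + 2 : ℕ) : ℝ), fun x hx y hy => ?_⟩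
        dsimp only
        have hxD : x ∈ D n := Or.inl (hAn hx)
        have hyD : y ∈ D n := Or.inl (hAn hy)
        have hx' : RelW D x⁻¹ (0 + n + 1) := by
          simpa using ((RelW.one).step hxD).inv hDsym
        have hy' : RelW D y (0 + n + 1) := by simpa using (RelW.one).step hyD
        have : ℓ (x⁻¹ * y) ≤ (0 + n + 1) + (0 + n + 1) := hℓle (hx'.mul hy')
        have h2 : ℓ (x⁻¹ * y) ≤ 2 * n + 2 := by omega
        exact_mod_cast h2
      · rintro ⟨r, hr⟩
        rcases A.eq_empty_or_nonempty with rfl | ⟨a, ha⟩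
        · exact hsubset _ {1} (by simp) (hsingle 1)
        · set m : ℕ := ⌈r⌉₊ with hm
          have key : A ⊆ {a} * (EW D m ^ m) := by
            intro x hx
            have h1 : (ℓ (a⁻¹ * x) : ℝ) ≤ r := hr a ha x hx
            have h2 : ℓ (a⁻¹ * x) ≤ m := by
              have := h1.trans (Nat.le_ceil r)
              exact_mod_cast this
            have h3 : a⁻¹ * x ∈ EW D (ℓ (a⁻¹ * x)) ^ (ℓ (a⁻¹ * x)) :=
              (hℓmem (a⁻¹ * x)).mem_pow
            have h4 : a⁻¹ * x ∈ EW D m ^ m :=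
              Set.pow_subset_pow (EW_mono D h2) (one_mem_EW D m) h2 h3
            rw [Set.singleton_mul]
            exact ⟨a⁻¹ * x, h4, by group⟩
          exact hsubset _ _ key (hmul _ (hsingle a) _ (hpowmem _ (hEmem m) m))
  · rintro ⟨d, hpos, heq, hsymm, htri, hlinv, hbdd⟩
    refine ⟨fun n => {x | d 1 x ≤ n}, ?_, ?_⟩
    · intro n
      rw [hbdd]
      refine ⟨2 * n, fun x hx y hy => ?_⟩
      calc d x y ≤ d x 1 + d 1 y := htri x 1 y
        _ ≤ n + n := add_le_add (by rw [hsymm]; exact hx) hy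
        _ = 2 * n := by ring
    · intro A hA
      obtain ⟨r, hr⟩ := (hbdd A).mp hA
      rcases A.eq_empty_or_nonempty with rfl | ⟨a, ha⟩
      · exact ⟨0, by simp⟩
      · refine ⟨⌈max 0 (d 1 a + r)⌉₊, fun x hx => ?_⟩
        have h1 : d 1 x ≤ d 1 a + d a x := htri 1 a x
        have h2 : d a x ≤ r := hr a ha x hx
        have : d 1 a + r ≤ (⌈max 0 (d 1 a + r)⌉₊ : ℝ) :=
          (le_max_right _ _).trans (Nat.le_ceil _)
        exact le_trans (h1.trans (by linarith)) this
end

section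
/- Let G be a group and K a symmetric subset of G with 1 ∈ K that generates G. The following are equivalent: (1) for every n ≥ 1 there exist finitely many elements g₁, …, g_k ∈ G with Kⁿ ⊆ ⋃_{i=1}^k g_i·K; (2) there exist finitely many elements g₁, …, g_k ∈ G with K·K ⊆ ⋃_{i=1}^k g_i·K; (3) for each s ≥ 1 there is N_s ≥ 1 such that for each n ≥ 1 there is a set F ⊆ G with at most N_s elements and K^{n+s} ⊆ ⋃_{g ∈ F} g·Kⁿ. -/
open Set Pointwise

theorem bounded_geometry_tfae {G : Type*} [Group G] (K : Set G)
    (hKsymm : K⁻¹ = K) (hK1 : (1 : G) ∈ K) (hKgen : Subgroup.closure K = ⊤) :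
    List.TFAE
      [∀ n : ℕ, 1 ≤ n → ∃ F : Finset G, K ^ n ⊆ ⋃ g ∈ F, g • K,
       ∃ F : Finset G, K * K ⊆ ⋃ g ∈ F, g • K,
       ∀ s : ℕ, 1 ≤ s → ∃ N : ℕ, 1 ≤ N ∧ ∀ n : ℕ, 1 ≤ n →
         ∃ F : Finset G, F.card ≤ N ∧ K ^ (n + s) ⊆ ⋃ g ∈ F, g • K ^ n] := by
  classical
  tfae_have 1 → 2
  · intro h
    obtain ⟨F, hF⟩ := h 2 (by norm_num)
    exact ⟨F, by rwa [sq] at hF⟩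
  tfae_have 2 → 3
  · rintro ⟨F, hF⟩
    have hFne : F.Nonempty := by
      have h1 : (1 : G) ∈ K * K := ⟨1, hK1, 1, hK1, one_mul 1⟩
      obtain ⟨_, ⟨g, rfl⟩, hg⟩ := hF h1
      simp only [Set.mem_iUnion] at hg
      obtain ⟨hgF, _⟩ := hg
      exact ⟨g, hgF⟩
    have step : ∀ n : ℕ, 1 ≤ n → K ^ (n + 1) ⊆ ⋃ g ∈ F, g • K ^ n := by
      intro n hn x hx
      obtain ⟨m, rfl⟩ := Nat.exists_eq_add_of_le hn
      rw [show 1 + m + 1 = 2 + m by ring, pow_add] at hx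
      obtain ⟨a, ha, b, hb, rfl⟩ := hx
      rw [sq] at ha
      have := hF ha
      simp only [Set.mem_iUnion] at this
      obtain ⟨g, hgF, c, hc, rfl⟩ := this
      simp only [Set.mem_iUnion]
      refine ⟨g, hgF, c * b, ?_, by simp [smul_eq_mul, mul_assoc]⟩
      rw [show 1 + m = m + 1 from by ring, pow_succ']
      exact ⟨c, hc, b, hb, rfl⟩
    have key : ∀ s : ℕ, 1 ≤ s → ∀ n : ℕ, 1 ≤ n →
        K ^ (n + s) ⊆ ⋃ g ∈ (F ^ s : Finset G), g • K ^ n := by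
      intro s hs
      induction s with
      | zero => omega
      | succ s ih =>
        rcases Nat.eq_or_lt_of_le hs with h1 | h1
        · obtain rfl : s = 0 := by omega
          intro n hn
          simpa using step n hn
        · intro n hn x hx
          have hs' : 1 ≤ s := by omega
          have hx' : x ∈ ⋃ g ∈ (F ^ s : Finset G), g • K ^ (n + 1) := by
            apply ih hs' (n + 1) (by omega)
            rw [show n + 1 + s = n + (s + 1) from by ring]
            exact hx
          simp only [Set.mem_iUnion] at hx'
          obtain ⟨g, hgF, y, hy, rfl⟩ := hx'
          have := step n hn hy
          simp only [Set.mem_iUnion] at this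
          obtain ⟨h, hhF, z, hz, rfl⟩ := this
          simp only [Set.mem_iUnion]
          refine ⟨g * h, ?_, z, hz, by simp [smul_eq_mul, mul_assoc]⟩
          rw [pow_succ]
          exact Finset.mul_mem_mul hgF hhF
    intro s hs
    refine ⟨F.card ^ s, ?_, fun n hn => ⟨F ^ s, ?_, key s hs n hn⟩⟩
    · exact Nat.one_le_iff_ne_zero.mpr (pow_ne_zero _ (Finset.card_ne_zero_of_mem hFne.choose_spec))
    · exact Finset.card_pow_le
  tfae_have 3 → 1
  · intro h n hn
    rcases Nat.eq_or_lt_of_le hn with h1 | h1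
    · refine ⟨{1}, ?_⟩
      rw [← h1, pow_one]
      intro x hx
      simp only [Finset.mem_singleton, Set.mem_iUnion]
      exact ⟨1, rfl, by simpa using hx⟩
    · obtain ⟨N, hN, hfn⟩ := h (n - 1) (by omega)
      obtain ⟨F, _, hF⟩ := hfn 1 le_rfl
      refine ⟨F, ?_⟩
      rw [show 1 + (n - 1) = n from by omega, pow_one] at hF
      exact hF
  tfae_finish
end

section
/- Let G be a large scale group whose bornology has a countable basis (there is a sequence (B_n)_{n≥1} of bounded sets such that every bounded set is contained in some B_n). If G is unbounded and locally bounded (for every bounded subset B of G, the subgroup ⟨B⟩ generated by B is bounded), then the set of ends of G is infinite. -/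
open Set Pointwise

/-- A subset `A` is coarsely clopen relative to a bornology `ℬ` on a group `G`
if `(A·B) ∩ (Aᶜ·B)` is bounded for every bounded `B`. -/
def CoarselyClopen {G : Type*} [Group G] (ℬ : Set (Set G)) (A : Set G) : Prop :=
  ∀ B ∈ ℬ, (A * B) ∩ (Aᶜ * B) ∈ ℬ

/-- A family of unbounded coarsely clopen sets, all of whose finite intersections
are unbounded. -/
def IsGoodFamily {G : Type*} [Group G] (ℬ : Set (Set G)) (E : Set (Set G)) : Prop :=
  (∀ A ∈ E, A ∉ ℬ ∧ CoarselyClopen ℬ A) ∧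
    (∀ F : Finset (Set G), F.Nonempty → (F : Set (Set G)) ⊆ E →
      ⋂₀ (F : Set (Set G)) ∉ ℬ)

/-- An end of a group with a bornology: a maximal family of unbounded coarsely clopen
sets with all finite intersections unbounded. -/
def IsEnd {G : Type*} [Group G] (ℬ : Set (Set G)) (E : Set (Set G)) : Prop :=
  IsGoodFamily ℬ E ∧ ∀ E' : Set (Set G), IsGoodFamily ℬ E' → E ⊆ E' → E' = E

/-- The set of ends of a group with a bornology. -/
def Ends {G : Type*} [Group G] (ℬ : Set (Set G)) : Set (Set (Set G)) :=
  {E | IsEnd ℬ E}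

/-- A finite nonempty subset of the union of a chain of sets is contained in one member. -/
lemma finset_subset_chain_sUnion {α : Type*} {c : Set (Set α)} (hc : IsChain (· ⊆ ·) c) :
    ∀ F : Finset α, F.Nonempty → (F : Set α) ⊆ ⋃₀ c → ∃ E ∈ c, (F : Set α) ⊆ E := by
  classical
  intro F
  induction F using Finset.induction with
  | empty => intro h; exact absurd rfl h.ne_empty
  | @insert a F ha ih =>
    intro _ hsub
    obtain ⟨E₁, hE₁c, haE₁⟩ := hsub (Finset.mem_coe.2 (Finset.mem_insert_self a F))
    rcases F.eq_empty_or_nonempty with hF | hF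
    · subst hF
      exact ⟨E₁, hE₁c, by simpa using haE₁⟩
    · obtain ⟨E₂, hE₂c, hFE₂⟩ := ih hF ((Finset.coe_subset.2 (F.subset_insert a)).trans hsub)
      rcases hc.total hE₁c hE₂c with h | h
      · exact ⟨E₂, hE₂c, by
          rw [Finset.coe_insert]
          exact Set.insert_subset (h haE₁) hFE₂⟩
      · exact ⟨E₁, hE₁c, by
          rw [Finset.coe_insert]
          exact Set.insert_subset haE₁ (hFE₂.trans h)⟩

/-- Every good family extends to an end. -/
lemma exists_end_extending {G : Type*} [Group G] (ℬ : Set (Set G)) (E0 : Set (Set G))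
    (h0 : IsGoodFamily ℬ E0) : ∃ E, IsEnd ℬ E ∧ E0 ⊆ E := by
  have hchains : ∀ c ⊆ {E | IsGoodFamily ℬ E}, IsChain (· ⊆ ·) c → c.Nonempty →
      ∃ ub ∈ {E | IsGoodFamily ℬ E}, ∀ s ∈ c, s ⊆ ub := by
    intro c hcS hchain hcne
    refine ⟨⋃₀ c, ⟨?_, ?_⟩, fun s hs => Set.subset_sUnion_of_mem hs⟩
    · intro A hA
      obtain ⟨E, hEc, hAE⟩ := hA
      exact (hcS hEc).1 A hAE
    · intro F hFne hFsub
      obtain ⟨E, hEc, hFE⟩ := finset_subset_chain_sUnion hchain F hFne hFsub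
      exact (hcS hEc).2 F hFne hFE
  obtain ⟨m, hm0, hmax⟩ := zorn_subset_nonempty {E | IsGoodFamily ℬ E} hchains E0 h0
  refine ⟨m, ⟨hmax.prop, fun E' hE' hmE' => ?_⟩, hm0⟩
  exact le_antisymm (hmax.le_of_ge hE' hmE') hmE'

theorem locally_bounded_infinitely_many_ends {G : Type*} [Group G] (ℬ : Set (Set G))
    (hsingle : ∀ g : G, {g} ∈ ℬ)
    (hsubset : ∀ S T : Set G, S ⊆ T → T ∈ ℬ → S ∈ ℬ)
    (hunion : ∀ S ∈ ℬ, ∀ T ∈ ℬ, S ∪ T ∈ ℬ)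
    (hmul : ∀ S ∈ ℬ, ∀ T ∈ ℬ, S * T ∈ ℬ)
    (hinv : ∀ S ∈ ℬ, S⁻¹ ∈ ℬ)
    (hbasis : ∃ Bs : ℕ → Set G, (∀ n, Bs n ∈ ℬ) ∧ ∀ A ∈ ℬ, ∃ n, A ⊆ Bs n)
    (hGunb : (Set.univ : Set G) ∉ ℬ)
    (hlocbdd : ∀ B ∈ ℬ, ((Subgroup.closure B : Subgroup G) : Set G) ∈ ℬ) :
    (Ends ℬ).Infinite := by
  classical
  obtain ⟨Bs, hBsb, hbase⟩ := hbasis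
  -- cumulative generating sets
  set U : ℕ → Set G := fun n => ⋃ k ∈ Finset.range (n + 1), Bs k with hUdef
  have hU : ∀ n, U n ∈ ℬ := by
    intro n
    induction n with
    | zero => simpa [hUdef] using hBsb 0
    | succ n ih =>
      have : U (n + 1) = Bs (n + 1) ∪ U n := by
        simp only [hUdef, Finset.range_add_one, Finset.set_biUnion_insert]
      rw [this]
      exact hunion _ (hBsb _) _ ih
  have hBsU : ∀ n, Bs n ⊆ U n := fun n =>
    Set.subset_biUnion_of_mem (Finset.self_mem_range_succ n)
  have hUmono : ∀ {m n : ℕ}, m ≤ n → U m ⊆ U n := by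
    intro m n hmn x hx
    simp only [hUdef, Set.mem_iUnion] at hx ⊢
    obtain ⟨k, hk, hxk⟩ := hx
    exact ⟨k, Finset.mem_range.2 (lt_of_lt_of_le (Finset.mem_range.1 hk) (by omega)), hxk⟩
  -- the increasing sequence of bounded subgroups
  set H : ℕ → Subgroup G := fun n => Subgroup.closure (U n) with hHdef
  have hHb : ∀ n, ((H n : Subgroup G) : Set G) ∈ ℬ := fun n => hlocbdd _ (hU n)
  have hHmono : ∀ {m n : ℕ}, m ≤ n → H m ≤ H n := fun hmn =>
    Subgroup.closure_mono (hUmono hmn)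
  have hcover : ∀ g : G, ∃ n, g ∈ H n := by
    intro g
    obtain ⟨n, hn⟩ := hbase {g} (hsingle g)
    exact ⟨n, Subgroup.subset_closure (hBsU n (hn rfl))⟩
  have hbdd : ∀ A ∈ ℬ, ∃ n, A ⊆ ((H n : Subgroup G) : Set G) := by
    intro A hA
    obtain ⟨n, hn⟩ := hbase A hA
    exact ⟨n, hn.trans ((hBsU n).trans Subgroup.subset_closure)⟩
  -- infinitely many strict jumps
  have hNinf : {n : ℕ | ¬ H (n + 1) ≤ H n}.Infinite := by
    by_contra hfin
    rw [Set.not_infinite] at hfin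
    obtain ⟨m, hm⟩ := hfin.bddAbove
    have hstab : ∀ k, H k ≤ H (m + 1) := by
      intro k
      induction k with
      | zero => exact hHmono (Nat.zero_le _)
      | succ k ih =>
        by_cases hk : k + 1 ≤ m + 1
        · exact hHmono hk
        · have hknot : k ∉ {n : ℕ | ¬ H (n + 1) ≤ H n} := by
            intro hkm
            exact absurd (hm hkm) (by omega)
          simp only [Set.mem_setOf_eq, not_not] at hknot
          exact hknot.trans ih
    refine hGunb (hsubset _ _ ?_ (hHb (m + 1)))
    intro g _
    obtain ⟨n, hn⟩ := hcover g
    exact hstab n hn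
  -- disjoint infinite families of jump indices
  set e := hNinf.natEmbedding with hedef
  set p : ℕ → ℕ → ℕ := fun i j => (e (Nat.pair i j) : ℕ) with hpdef
  have hpN : ∀ i j, ¬ H (p i j + 1) ≤ H (p i j) := fun i j => (e (Nat.pair i j)).2
  have hpinj : ∀ {i j i' j'}, p i j = p i' j' → i = i' ∧ j = j' := by
    intro i j i' j' h
    have := e.injective (Subtype.ext h)
    exact Nat.pair_eq_pair.1 this
  -- the disjoint unbounded coarsely clopen sets
  set A : ℕ → Set G := fun i =>
    ⋃ j : ℕ, (((H (p i j + 1) : Subgroup G) : Set G) \ ((H (p i j) : Subgroup G) : Set G))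
    with hAdef
  -- shell uniqueness
  have hshell : ∀ {x : G} {n k : ℕ},
      x ∈ ((H (n + 1) : Subgroup G) : Set G) \ (H n : Subgroup G) →
      x ∈ ((H (k + 1) : Subgroup G) : Set G) \ (H k : Subgroup G) → n = k := by
    intro x n k hn hk
    by_contra hne
    rcases Nat.lt_or_ge n k with h | h
    · exact hk.2 (hHmono (by omega) hn.1)
    · have : k < n := by omega
      exact hn.2 (hHmono (by omega) hk.1)
  -- locating points outside H m in shells
  have hfind : ∀ (x : G) (m : ℕ), x ∉ ((H m : Subgroup G) : Set G) →
      ∃ n, m ≤ n ∧ x ∈ ((H (n + 1) : Subgroup G) : Set G) \ (H n : Subgroup G) := by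
    intro x m hxm
    obtain ⟨k, hk⟩ := hcover x
    have hex : ∃ j, x ∈ H j := ⟨k, hk⟩
    set j := Nat.find hex with hjdef
    have hxj : x ∈ H j := Nat.find_spec hex
    have hjm : m < j := by
      by_contra h
      exact hxm (hHmono (by omega) hxj)
    refine ⟨j - 1, by omega, ?_, ?_⟩
    · have : j - 1 + 1 = j := by omega
      rw [this]; exact hxj
    · exact Nat.find_min hex (by omega)
  -- coarse clopenness
  have hcc : ∀ i, CoarselyClopen ℬ (A i) := by
    intro i B hB
    obtain ⟨m, hBm⟩ := hbdd B hB
    refine hsubset _ _ ?_ (hHb m)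
    intro x hx
    by_contra hxm
    obtain ⟨n, hmn, hxshell⟩ := hfind x m hxm
    obtain ⟨hx1, hx2⟩ := hx
    obtain ⟨a, ha, b, hb, hab⟩ := hx1
    obtain ⟨c, hc, b', hb', hcb⟩ := hx2
    have hbH : b ∈ H n := hHmono hmn (hBm hb)
    have hb'H : b' ∈ H n := hHmono hmn (hBm hb')
    have hashell : a ∈ ((H (n + 1) : Subgroup G) : Set G) \ (H n : Subgroup G) := by
      constructor
      · have : a = x * b⁻¹ := by rw [← hab]; group
        rw [this]
        exact mul_mem hxshell.1 (inv_mem (hHmono (Nat.le_succ n) hbH))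
      · intro haH
        exact hxshell.2 (by rw [← hab]; exact mul_mem haH hbH)
    have hcshell : c ∈ ((H (n + 1) : Subgroup G) : Set G) \ (H n : Subgroup G) := by
      constructor
      · have : c = x * b'⁻¹ := by rw [← hcb]; group
        rw [this]
        exact mul_mem hxshell.1 (inv_mem (hHmono (Nat.le_succ n) hb'H))
      · intro hcH
        exact hxshell.2 (by rw [← hcb]; exact mul_mem hcH hb'H)
    -- a ∈ A i, so its shell index is some p i j, equal to n
    rw [hAdef, Set.mem_iUnion] at ha
    obtain ⟨j, haj⟩ := ha
    have hpn : p i j = n := hshell haj hashell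
    -- then c is in the same shell, so c ∈ A i, contradiction
    apply hc
    rw [hAdef, Set.mem_iUnion]
    exact ⟨j, by rw [hpn]; exact hcshell⟩
  -- unboundedness
  have hAunb : ∀ i, A i ∉ ℬ := by
    intro i hAi
    obtain ⟨m, hm⟩ := hbdd _ hAi
    have hinj : Function.Injective (p i) := fun j j' h => (hpinj h).2
    obtain ⟨n, ⟨j, hj⟩, hmn⟩ := (Set.infinite_range_of_injective hinj).exists_gt m
    subst hj
    obtain ⟨y, hy1, hy2⟩ := SetLike.not_le_iff_exists.1 (hpN i j)
    have hyA : y ∈ A i := by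
      rw [hAdef, Set.mem_iUnion]
      exact ⟨j, hy1, hy2⟩
    exact hy2 (hHmono (le_of_lt hmn) (hm hyA))
  -- disjointness
  have hdisj : ∀ {i i'}, i ≠ i' → A i ∩ A i' = ∅ := by
    intro i i' hne
    ext x
    simp only [Set.mem_inter_iff, Set.mem_empty_iff_false, iff_false, not_and]
    intro hx hx'
    rw [hAdef, Set.mem_iUnion] at hx hx'
    obtain ⟨j, hj⟩ := hx
    obtain ⟨j', hj'⟩ := hx'
    exact hne (hpinj (hshell hj hj')).1
  -- singletons are good families
  have hgood : ∀ i, IsGoodFamily ℬ {A i} := by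
    intro i
    constructor
    · intro A' hA'
      rw [Set.mem_singleton_iff] at hA'
      subst hA'
      exact ⟨hAunb i, hcc i⟩
    · intro F hFne hFsub
      have hFeq : ⋂₀ (F : Set (Set G)) = A i := by
        obtain ⟨s, hs⟩ := hFne
        apply le_antisymm
        · intro x hx
          have : s = A i := hFsub hs
          rw [← this]
          exact hx s hs
        · intro x hx t ht
          have : t = A i := hFsub ht
          rw [this]; exact hx
      rw [hFeq]
      exact hAunb i
  -- extend to ends
  have hends : ∀ i, ∃ E, IsEnd ℬ E ∧ A i ∈ E := by
    intro i
    obtain ⟨E, hE, hsub⟩ := exists_end_extending ℬ {A i} (hgood i)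
    exact ⟨E, hE, hsub rfl⟩
  choose Ef hEf hAEf using hends
  have hempty : (∅ : Set G) ∈ ℬ := hsubset _ {1} (Set.empty_subset _) (hsingle 1)
  refine Set.infinite_of_injective_forall_mem (f := Ef) ?_ ?_
  · intro i i' h
    by_contra hne
    have hAi' : A i' ∈ Ef i := by rw [h]; exact hAEf i'
    have := (hEf i).1.2 {A i, A i'} (by simp) ?_
    · apply this
      have : ⋂₀ (({A i, A i'} : Finset (Set G)) : Set (Set G)) = A i ∩ A i' := by
        simp [Set.sInter_pair]
      rw [this, hdisj hne]
      exact hempty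
    · intro s hs
      simp only [Finset.coe_insert, Finset.coe_singleton, Set.mem_insert_iff,
        Set.mem_singleton_iff] at hs
      rcases hs with h1 | h1 <;> subst h1
      · exact hAEf i
      · exact hAi'
  · exact fun i => hEf i
end

section
/- Let G be a large scale group that has a basis (G_i)_{i≥1} of unbounded boundedly generated subgroups: each G_i is unbounded, each G_i is generated by a bounded subset of G, and every bounded subset of G is contained in some G_i. If A is an unbounded coarsely clopen subset of G, then there is n ≥ 1 such that A ∩ G_n is unbounded. -/
open Set Pointwise

theorem coarsely_clopen_meets_basis_subgroup {G : Type*} [Group G] (ℬ : Set (Set G))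
    (hsingle : ∀ g : G, {g} ∈ ℬ)
    (hsubset : ∀ S T : Set G, S ⊆ T → T ∈ ℬ → S ∈ ℬ)
    (hunion : ∀ S ∈ ℬ, ∀ T ∈ ℬ, S ∪ T ∈ ℬ)
    (hmul : ∀ S ∈ ℬ, ∀ T ∈ ℬ, S * T ∈ ℬ)
    (hinv : ∀ S ∈ ℬ, S⁻¹ ∈ ℬ)
    (Gi : ℕ → Subgroup G)
    (hunb : ∀ i, ((Gi i : Subgroup G) : Set G) ∉ ℬ)
    (hgen : ∀ i, ∃ B ∈ ℬ, Subgroup.closure B = Gi i)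
    (hbasis : ∀ B ∈ ℬ, ∃ i, B ⊆ (Gi i : Set G))
    (A : Set G) (hAunb : A ∉ ℬ) (hAclopen : CoarselyClopen ℬ A) :
    ∃ n, A ∩ (Gi n : Set G) ∉ ℬ := by
  by_contra hcon
  push_neg at hcon
  obtain ⟨B, hB, hBgen⟩ := hgen 0
  -- the symmetrized bounded generating set
  set Bt : Set G := B ∪ B⁻¹ ∪ {1} with hBtdef
  have hBt : Bt ∈ ℬ := hunion _ (hunion _ hB _ (hinv _ hB)) _ (hsingle 1)
  have h1Bt : (1 : G) ∈ Bt := Or.inr rfl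
  set C : Set G := (A * Bt) ∩ (Aᶜ * Bt) with hCdef
  have hC : C ∈ ℬ := hAclopen Bt hBt
  set N : Set G := (Gi 0 : Set G) with hNdef
  -- crossing points lie in C
  have cross : ∀ a b : G, b ∈ Bt → b⁻¹ ∈ Bt → ¬(a ∈ A ↔ a * b ∈ A) → (a ∈ C ∨ a * b ∈ C) := by
    intro a b hb hbinv hx
    by_cases ha : a ∈ A
    · have hab : a * b ∉ A := fun h => hx ⟨fun _ => h, fun _ => ha⟩
      left
      refine ⟨⟨a, ha, 1, h1Bt, mul_one a⟩, ⟨a * b, hab, b⁻¹, hbinv, by group⟩⟩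
    · have hab : a * b ∈ A := by
        by_contra hab
        exact hx ⟨fun h => absurd h ha, fun h => absurd h hab⟩
      right
      refine ⟨⟨a * b, hab, 1, h1Bt, mul_one _⟩, ⟨a, ha, b, hb, rfl⟩⟩
  -- key induction: if a and a*g are on opposite sides, then a ∈ C * N
  have key : ∀ g, g ∈ Subgroup.closure B → ∀ a : G, ¬(a ∈ A ↔ a * g ∈ A) → a ∈ C * N := by
    intro g hg
    induction hg using Subgroup.closure_induction with
    | mem x hx =>
      intro a hxor
      have hxBt : x ∈ Bt := Or.inl (Or.inl hx)
      have hxBt' : x⁻¹ ∈ Bt := Or.inl (Or.inr (by simpa using hx))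
      rcases cross a x hxBt hxBt' hxor with h | h
      · exact ⟨a, h, 1, one_mem _, mul_one a⟩
      · refine ⟨a * x, h, x⁻¹, ?_, by group⟩
        have hx' : x ∈ Gi 0 := hBgen ▸ Subgroup.subset_closure hx
        exact inv_mem hx'
    | one =>
      intro a hxor
      rw [mul_one] at hxor
      exact absurd Iff.rfl hxor
    | mul x y hx hy ihx ihy =>
      intro a hxor
      by_cases hmid : (a ∈ A ↔ a * x ∈ A)
      · -- crossing happens along y, starting from a * x
        have hxor2 : ¬(a * x ∈ A ↔ (a * x) * y ∈ A) := by
          rw [← mul_assoc] at hxor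
          exact fun h => hxor (hmid.trans h)
        obtain ⟨c, hc, m, hm, hcm⟩ := ihy (a * x) hxor2
        rw [hBgen] at hx
        have hm' : m ∈ Gi 0 := hm
        have hcm' : c * m = a * x := hcm
        refine ⟨c, hc, m * x⁻¹, mul_mem hm' (inv_mem hx), ?_⟩
        calc c * (m * x⁻¹) = (c * m) * x⁻¹ := by group
          _ = (a * x) * x⁻¹ := by rw [hcm']
          _ = a := by group
      · exact ihx a hmid
    | inv x hx ihx =>
      intro a hxor
      have hxor2 : ¬(a * x⁻¹ ∈ A ↔ (a * x⁻¹) * x ∈ A) := by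
        have : (a * x⁻¹) * x = a := by group
        rw [this]
        exact fun h => hxor (Iff.comm.mp h)
      obtain ⟨c, hc, m, hm, hcm⟩ := ihx (a * x⁻¹) hxor2
      rw [hBgen] at hx
      have hm' : m ∈ Gi 0 := hm
      have hcm' : c * m = a * x⁻¹ := hcm
      refine ⟨c, hc, m * x, mul_mem hm' hx, ?_⟩
      calc c * (m * x) = (c * m) * x := by group
        _ = (a * x⁻¹) * x := by rw [hcm']
        _ = a := by group
  by_cases hcase : ∃ a ∈ A, ∀ g ∈ Gi 0, a * g ∈ A
  · -- a whole coset a • Gi 0 sits inside A; it is contained in some Gi m, contradicting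
    -- unboundedness of Gi 0
    obtain ⟨a, haA, hall⟩ := hcase
    obtain ⟨m, hm⟩ := hbasis ({a} ∪ B) (hunion _ (hsingle a) _ hB)
    have haM : a ∈ Gi m := hm (Or.inl rfl)
    have hBM : Subgroup.closure B ≤ Gi m := (Subgroup.closure_le _).mpr
      (fun x hx => hm (Or.inr hx))
    have hsub : ({a} : Set G) * N ⊆ A ∩ (Gi m : Set G) := by
      rintro _ ⟨x, rfl, g, hg, rfl⟩
      refine ⟨hall g hg, ?_⟩
      have hgM : g ∈ Gi m := by
        rw [hNdef, ← hBgen] at hg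
        exact hBM hg
      exact mul_mem haM hgM
    have hcoset : ({a} : Set G) * N ∈ ℬ :=
      hsubset _ _ hsub (hcon m)
    have : N ∈ ℬ := by
      refine hsubset _ ({a⁻¹} * (({a} : Set G) * N)) ?_
        (hmul _ (hsingle a⁻¹) _ hcoset)
      intro g hg
      exact ⟨a⁻¹, rfl, a * g, ⟨a, rfl, g, hg, rfl⟩, by group⟩
    exact hunb 0 this
  · -- every point of A can cross to the complement inside its coset, so A ⊆ C * N
    push_neg at hcase
    have hAsub : A ⊆ C * N := by
      intro a ha
      obtain ⟨g, hg, hgA⟩ := hcase a ha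
      have hg' : g ∈ Subgroup.closure B := by rw [hBgen]; exact hg
      exact key g hg' a (fun h => hgA (h.mp ha))
    obtain ⟨m, hm⟩ := hbasis (C ∪ B) (hunion _ hC _ hB)
    have hBM : Subgroup.closure B ≤ Gi m := (Subgroup.closure_le _).mpr
      (fun x hx => hm (Or.inr hx))
    have hA' : A ⊆ (Gi m : Set G) := by
      intro a ha
      obtain ⟨c, hc, n, hn, rfl⟩ := hAsub ha
      have hcM : c ∈ Gi m := hm (Or.inl hc)
      have hnM : n ∈ Gi m := by
        rw [hNdef, ← hBgen] at hn
        exact hBM hn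
      exact mul_mem hcM hnM
    exact hAunb (hsubset A (A ∩ (Gi m : Set G)) (fun x hx => ⟨hx, hA' hx⟩) (hcon m))
end

section
/- Let G be a large scale group that has a basis (G_i)_{i≥1} of unbounded boundedly generated subgroups: each G_i is unbounded, each G_i is generated by a bounded subset of G, and every bounded subset of G is contained in some G_i. Regard each G_i as a large scale group whose bounded sets are the bounded subsets of G contained in G_i. Let m be a natural number. If each G_i has at most m ends, then G has at most m ends. -/
open Set Pointwise

/-- The bornology induced on a subgroup: a subset of the subgroup is bounded iff
its image in the ambient group is bounded. -/
def inducedBornology {G : Type*} [Group G] (ℬ : Set (Set G)) (H : Subgroup G) :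
    Set (Set H) :=
  {S : Set H | (Subtype.val '' S : Set G) ∈ ℬ}

/-!
If `G` had `m + 1` ends, separating them pairwise by coarsely clopen sets and intersecting
would give pairwise disjoint unbounded coarsely clopen sets `A₀, …, Aₘ`, one in each end.
Each `Aⱼ` has unbounded trace on some `Gi`: either `Aⱼ` lies in a basis subgroup, or it contains
a point `a` outside a basis subgroup that contains both a generating set `T` of `G₀` and the
`T`-boundary of `Aⱼ`; then the whole translate `a * G₀` lies in `Aⱼ`. Since the `Gi` are
directed, a single `Gi K` meets every `Aⱼ` in an unbounded set. These traces are pairwise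
disjoint, unbounded and coarsely clopen in `Gi K`, so they lie in `m + 1` distinct ends of `Gi K`.
-/

open Order Function

section Ideal

variable {α : Type*} {ℬ : Set (Set α)} {s t : Set α}

theorem Order.IsIdeal.empty_mem (hℬ : IsIdeal ℬ) : ∅ ∈ ℬ :=
  hℬ.toIdeal.bot_mem

theorem Order.IsIdeal.union_mem (hℬ : IsIdeal ℬ) (hs : s ∈ ℬ) (ht : t ∈ ℬ) : s ∪ t ∈ ℬ :=
  hℬ.toIdeal.sup_mem hs ht

end Ideal

section CoarselyClopen

variable {G : Type*} [Group G] {ℬ : Set (Set G)} {A B : Set G}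

theorem CoarselyClopen.compl (hA : CoarselyClopen ℬ A) : CoarselyClopen ℬ Aᶜ := by
  intro C hC
  rw [compl_compl, inter_comm]
  exact hA C hC

theorem CoarselyClopen.inter (hℬ : IsIdeal ℬ) (hA : CoarselyClopen ℬ A)
    (hB : CoarselyClopen ℬ B) : CoarselyClopen ℬ (A ∩ B) := by
  intro C hC
  refine hℬ.IsLowerSet ?_ (hℬ.union_mem (hA C hC) (hB C hC))
  rintro _ ⟨⟨x, hx, c, hc, rfl⟩, ⟨y, hy, d, hd, hyd⟩⟩
  rcases not_and_or.mp hy with hy | hy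
  · exact Or.inl ⟨⟨x, hx.1, c, hc, rfl⟩, ⟨y, hy, d, hd, hyd⟩⟩
  · exact Or.inr ⟨⟨x, hx.2, c, hc, rfl⟩, ⟨y, hy, d, hd, hyd⟩⟩

theorem coarselyClopen_univ (hempty : ∅ ∈ ℬ) : CoarselyClopen ℬ (univ : Set G) := by
  intro C _
  rwa [compl_univ, empty_mul, inter_empty]

theorem preimage_val_mem_inducedBornology_iff (H : Subgroup G) :
    ((↑) : H → G) ⁻¹' A ∈ inducedBornology ℬ H ↔ A ∩ H ∈ ℬ := by
  rw [inducedBornology, mem_ofPred_eq, image_preimage_eq_inter_range, Subtype.range_coe]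

theorem CoarselyClopen.preimage_val (hℬ : IsLowerSet ℬ) (H : Subgroup G)
    (hA : CoarselyClopen ℬ A) : CoarselyClopen (inducedBornology ℬ H) (((↑) : H → G) ⁻¹' A) := by
  intro C hC
  refine hℬ ?_ (hA _ hC)
  rintro _ ⟨_, ⟨⟨x, hx, c, hc, rfl⟩, ⟨y, hy, d, hd, hyd⟩⟩, rfl⟩
  exact ⟨⟨x, hx, c, mem_image_of_mem _ hc, rfl⟩,
    ⟨y, hy, d, mem_image_of_mem _ hd, congrArg Subtype.val hyd⟩⟩

end CoarselyClopen

section Ends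

variable {G : Type*} [Group G] {ℬ : Set (Set G)} {E : Set (Set G)} {A B : Set G}

theorem IsGoodFamily.singleton (hA : A ∉ ℬ) (hcc : CoarselyClopen ℬ A) :
    IsGoodFamily ℬ {A} := by
  refine ⟨fun B hB => mem_singleton_iff.mp hB ▸ ⟨hA, hcc⟩, fun F hF hFA => ?_⟩
  rw [(subset_singleton_iff_eq.mp hFA).resolve_left (by simpa using hF.ne_empty), sInter_singleton]
  exact hA

theorem IsGoodFamily.sInter_notMem (hE : IsGoodFamily ℬ E) (huniv : univ ∉ ℬ)
    {F : Finset (Set G)} (hF : ↑F ⊆ E) : ⋂₀ ↑F ∉ ℬ := by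
  rcases F.eq_empty_or_nonempty with rfl | hne
  · simpa using huniv
  · exact hE.2 F hne hF

theorem IsGoodFamily.inter_notMem (hE : IsGoodFamily ℬ E) (hA : A ∈ E) (hB : B ∈ E) :
    A ∩ B ∉ ℬ := by
  classical
  simpa using hE.2 {A, B} (Finset.insert_nonempty A {B}) (by simp [insert_subset_iff, hA, hB])

theorem IsGoodFamily.exists_isEnd_superset (hE : IsGoodFamily ℬ E) :
    ∃ E', IsEnd ℬ E' ∧ E ⊆ E' := by
  have hchain : ∀ c ⊆ {E' | IsGoodFamily ℬ E'}, IsChain (· ⊆ ·) c → c.Nonempty →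
      ∃ ub ∈ {E' | IsGoodFamily ℬ E'}, ∀ s ∈ c, s ⊆ ub := by
    intro c hc hchain hne
    refine ⟨⋃₀ c, ⟨?_, fun F hF hFc => ?_⟩, fun _ => subset_sUnion_of_mem⟩
    · rintro A ⟨E', hE', hA⟩
      exact (hc hE').1 A hA
    · obtain ⟨E', hE', hFE'⟩ :=
        hchain.directedOn.exists_mem_subset_of_finite_of_subset_sUnion hne F.finite_toSet hFc
      exact (hc hE').2 F hF hFE'
  obtain ⟨M, hEM, hM⟩ := zorn_subset_nonempty {E' | IsGoodFamily ℬ E'} hchain E hE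
  exact ⟨M, ⟨hM.prop, fun E' hE' hME' => (hM.eq_of_subset hE' hME').symm⟩, hEM⟩

theorem IsEnd.mem_of_forall_inter_notMem (hℬ : IsLowerSet ℬ) (hE : IsEnd ℬ E)
    (hA : CoarselyClopen ℬ A) (h : ∀ F : Finset (Set G), ↑F ⊆ E → A ∩ ⋂₀ ↑F ∉ ℬ) : A ∈ E := by
  classical
  have hgood : IsGoodFamily ℬ (insert A E) := by
    refine ⟨?_, fun F _ hF hbdd => h (F.erase A) ?_ (hℬ ?_ hbdd)⟩
    · rintro B (rfl | hB)
      · exact ⟨by simpa using h ∅ (by simp), hA⟩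
      · exact hE.1.1 B hB
    · rw [Finset.coe_erase]
      exact sdiff_singleton_subset_iff.mpr hF
    · rintro x ⟨hxA, hx⟩ B hB
      by_cases hBA : B = A
      · exact hBA ▸ hxA
      · exact hx B (by simpa [hBA] using hB)
  rw [← hE.2 _ hgood (subset_insert A E)]
  exact mem_insert A E

theorem IsEnd.compl_mem_of_notMem (hℬ : IsIdeal ℬ) (hE : IsEnd ℬ E) (hA : A ∉ ℬ)
    (hcc : CoarselyClopen ℬ A) (hAE : A ∉ E) : Aᶜ ∈ E := by
  obtain ⟨F₁, hF₁, hbdd₁⟩ : ∃ F₁ : Finset (Set G), ↑F₁ ⊆ E ∧ A ∩ ⋂₀ ↑F₁ ∈ ℬ := by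
    by_contra! h
    exact hAE (hE.mem_of_forall_inter_notMem hℬ.IsLowerSet hcc h)
  classical
  refine hE.mem_of_forall_inter_notMem hℬ.IsLowerSet hcc.compl fun F₂ hF₂ hbdd₂ => ?_
  have huniv : univ ∉ ℬ := fun h => hA (hℬ.IsLowerSet (subset_univ A) h)
  refine hE.1.sInter_notMem huniv (F := F₁ ∪ F₂) (by simpa using union_subset hF₁ hF₂) ?_
  refine hℬ.IsLowerSet (fun x hx => ?_) (hℬ.union_mem hbdd₁ hbdd₂)
  rw [Finset.coe_union, sInter_union] at hx
  by_cases hxA : x ∈ A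
  · exact Or.inl ⟨hxA, hx.1⟩
  · exact Or.inr ⟨hxA, hx.2⟩

theorem IsEnd.exists_mem_compl_mem_of_ne {E' : Set (Set G)} (hℬ : IsIdeal ℬ) (hE : IsEnd ℬ E)
    (hE' : IsEnd ℬ E') (hne : E ≠ E') : ∃ A ∈ E, Aᶜ ∈ E' := by
  obtain ⟨A, hAE, hAE'⟩ := not_subset.mp fun h => hne (hE.2 E' hE'.1 h).symm
  exact ⟨A, hAE, hE'.compl_mem_of_notMem hℬ (hE.1.1 A hAE).1 (hE.1.1 A hAE).2 hAE'⟩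

theorem IsEnd.inter_mem (hℬ : IsIdeal ℬ) (hE : IsEnd ℬ E) (hA : A ∈ E) (hB : B ∈ E) :
    A ∩ B ∈ E := by
  classical
  refine hE.mem_of_forall_inter_notMem hℬ.IsLowerSet
    ((hE.1.1 A hA).2.inter hℬ (hE.1.1 B hB).2) fun F hF => ?_
  simpa [sInter_insert, inter_assoc] using
    hE.1.2 (insert A (insert B F)) (Finset.insert_nonempty _ _)
      (by simp [insert_subset_iff, hA, hB, hF])

theorem IsEnd.univ_mem (hℬ : IsIdeal ℬ) (hE : IsEnd ℬ E) (huniv : univ ∉ ℬ) : univ ∈ E :=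
  hE.mem_of_forall_inter_notMem hℬ.IsLowerSet (coarselyClopen_univ hℬ.empty_mem) fun F hF => by
    simpa using hE.1.sInter_notMem huniv hF

theorem IsEnd.finset_inf_mem {ι : Type*} (hℬ : IsIdeal ℬ) (hE : IsEnd ℬ E) (huniv : univ ∉ ℬ)
    {s : Finset ι} {f : ι → Set G} (hf : ∀ i ∈ s, f i ∈ E) : s.inf f ∈ E :=
  Finset.inf_induction (hE.univ_mem hℬ huniv) (fun _ hA _ hB => hE.inter_mem hℬ hA hB) hf

theorem exists_pairwise_disjoint_mem_ends {ι : Type*} [Finite ι] (hℬ : IsIdeal ℬ)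
    (huniv : univ ∉ ℬ) {E : ι → Set (Set G)} (hE : ∀ i, IsEnd ℬ (E i))
    (hinj : Injective E) :
    ∃ A : ι → Set G, (∀ i, A i ∈ E i) ∧ Pairwise (Disjoint on A) := by
  classical
  cases nonempty_fintype ι
  choose! S hS using fun i j (hij : i ≠ j) =>
    (hE i).exists_mem_compl_mem_of_ne hℬ (hE j) (hinj.ne hij)
  -- `A i` lies in `S i j` and in the complement of `S j i`, which contains `A j`.
  let A i := (Finset.univ.erase i).inf fun j => S i j ∩ (S j i)ᶜ
  have hA : ∀ i j, i ≠ j → A i ⊆ S i j ∩ (S j i)ᶜ := fun i j hij =>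
    Finset.inf_le (Finset.mem_erase.mpr ⟨hij.symm, Finset.mem_univ j⟩)
  refine ⟨A, fun i => (hE i).finset_inf_mem hℬ huniv fun j hj => ?_, fun i j hij => ?_⟩
  · have hji := Finset.ne_of_mem_erase hj
    exact (hE i).inter_mem hℬ (hS i j hji.symm).1 (hS j i hji).2
  · exact disjoint_compl_left.mono ((hA i j hij).trans inter_subset_right)
      ((hA j i hij.symm).trans inter_subset_left)

theorem enatCard_le_encard_ends {ι : Type*} (hempty : ∅ ∈ ℬ) {A : ι → Set G}
    (hA : ∀ i, A i ∉ ℬ ∧ CoarselyClopen ℬ (A i)) (hdisj : Pairwise (Disjoint on A)) :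
    ENat.card ι ≤ (Ends ℬ).encard := by
  choose E hE hAE using fun i => (IsGoodFamily.singleton (hA i).1 (hA i).2).exists_isEnd_superset
  refine ENat.card_le_card_of_injective (f := fun i => (⟨E i, hE i⟩ : Ends ℬ)) fun i j hij => ?_
  by_contra hne
  have hEij : E i = E j := congrArg Subtype.val hij
  have hAj : A j ∈ E i := hEij ▸ hAE j rfl
  exact (hE i).1.inter_notMem (hAE i rfl) hAj ((hdisj hne).inter_eq ▸ hempty)

theorem enatCard_le_encard_ends_inducedBornology {ι : Type*} (hℬ : IsIdeal ℬ) (H : Subgroup G)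
    {A : ι → Set G} (hA : ∀ i, A i ∩ H ∉ ℬ) (hcc : ∀ i, CoarselyClopen ℬ (A i))
    (hdisj : Pairwise (Disjoint on A)) : ENat.card ι ≤ (Ends (inducedBornology ℬ H)).encard :=
  enatCard_le_encard_ends (by simpa [inducedBornology] using hℬ.empty_mem)
    (fun i => ⟨(preimage_val_mem_inducedBornology_iff H).not.mpr (hA i),
      (hcc i).preimage_val hℬ.IsLowerSet H⟩)
    fun _ _ hij => (hdisj hij).preimage _

end Ends

section Subgroups

variable {G : Type*} [Group G]

open Subgroup

/-- A `T`-path starting at `a` stays in the coset `a * K`, which misses `K ⊇ (A * T) ∩ (Aᶜ * T)`,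
so it never leaves `A`. -/
theorem mul_mem_of_mem_closure_of_boundary_subset {K : Subgroup G} {A T : Set G} (hT1 : 1 ∈ T)
    (hTK : T ⊆ K) (hbdry : (A * T) ∩ (Aᶜ * T) ⊆ K) {a : G} (ha : a ∈ A) (haK : a ∉ K) {g : G}
    (hg : g ∈ closure T) : a * g ∈ A := by
  have hK : ∀ y ∈ closure T, a * y ∉ K := fun y hy h =>
    haK (by simpa using mul_mem h (inv_mem (closure_le K |>.mpr hTK hy)))
  induction hg using closure_induction_right with
  | one => simpa
  | mul_right y hy x hx ih =>
    by_contra h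
    have hbd : a * (y * x) ∈ (A * T) ∩ (Aᶜ * T) :=
      ⟨⟨a * y, ih, x, hx, mul_assoc _ _ _⟩, ⟨a * (y * x), h, 1, hT1, mul_one _⟩⟩
    exact hK (y * x) (mul_mem hy (subset_closure hx)) (hbdry hbd)
  | mul_inv_cancel y hy x hx ih =>
    by_contra h
    have hbd : a * y ∈ (A * T) ∩ (Aᶜ * T) :=
      ⟨⟨a * y, ih, 1, hT1, mul_one _⟩, ⟨a * (y * x⁻¹), h, x, hx, by group⟩⟩
    exact hK y hy (hbdry hbd)

variable {ℬ : Set (Set G)} {ι : Type*} {Gi : ι → Subgroup G}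

theorem exists_inter_notMem_of_basis (hsingle : ∀ g : G, {g} ∈ ℬ) (hℬ : IsIdeal ℬ)
    (hmul : ∀ S ∈ ℬ, ∀ T ∈ ℬ, S * T ∈ ℬ) (hbasis : ∀ B ∈ ℬ, ∃ i, B ⊆ (Gi i : Set G))
    {B₀ : Set G} (hB₀ : B₀ ∈ ℬ) (hB₀unb : (closure B₀ : Set G) ∉ ℬ) {A : Set G} (hA : A ∉ ℬ)
    (hcc : CoarselyClopen ℬ A) : ∃ i, A ∩ Gi i ∉ ℬ := by
  set T := insert 1 B₀
  have hT : T ∈ ℬ := hℬ.union_mem (hsingle 1) hB₀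
  obtain ⟨i, hi⟩ := hbasis _ (hℬ.union_mem (hcc T hT) hT)
  by_cases hAi : A ⊆ Gi i
  · exact ⟨i, by rwa [inter_eq_left.mpr hAi]⟩
  obtain ⟨a, ha, hai⟩ := not_subset.mp hAi
  obtain ⟨j, hj⟩ := hbasis _ (hℬ.union_mem (hsingle a) hT)
  have hTj : closure T ≤ Gi j := (closure_le _).mpr fun x hx => hj (Or.inr hx)
  -- `a * closure B₀ ⊆ A ∩ Gi j`, so `closure B₀ ⊆ {a⁻¹} * (A ∩ Gi j)`.
  refine ⟨j, fun hbdd => hB₀unb (hℬ.IsLowerSet (fun g hg => ?_) (hmul _ (hsingle a⁻¹) _ hbdd))⟩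
  rw [SetLike.mem_coe, ← closure_insert_one] at hg
  have hag : a * g ∈ A := mul_mem_of_mem_closure_of_boundary_subset (mem_insert 1 B₀)
    (fun x hx => hi (Or.inr hx)) (fun x hx => hi (Or.inl hx)) ha hai hg
  exact ⟨a⁻¹, rfl, a * g, ⟨hag, mul_mem (hj (Or.inl rfl)) (hTj hg)⟩, by group⟩

theorem directed_of_basis (hℬ : IsIdeal ℬ) (hgen : ∀ i, ∃ B ∈ ℬ, closure B = Gi i)
    (hbasis : ∀ B ∈ ℬ, ∃ i, B ⊆ (Gi i : Set G)) : Directed (· ≤ ·) Gi := by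
  intro i j
  obtain ⟨Bi, hBi, hcli⟩ := hgen i
  obtain ⟨Bj, hBj, hclj⟩ := hgen j
  obtain ⟨k, hk⟩ := hbasis _ (hℬ.union_mem hBi hBj)
  exact ⟨k, hcli ▸ (closure_le _).mpr (subset_union_left.trans hk),
    hclj ▸ (closure_le _).mpr (subset_union_right.trans hk)⟩

end Subgroups

theorem ends_le_of_basis_subgroups_ends_le_general {G : Type*} [Group G] (ℬ : Set (Set G))
    (hsingle : ∀ g : G, {g} ∈ ℬ)
    (hsubset : ∀ S T : Set G, S ⊆ T → T ∈ ℬ → S ∈ ℬ)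
    (hunion : ∀ S ∈ ℬ, ∀ T ∈ ℬ, S ∪ T ∈ ℬ)
    (hmul : ∀ S ∈ ℬ, ∀ T ∈ ℬ, S * T ∈ ℬ)
    (Gi : ℕ → Subgroup G)
    (hunb : ∀ i, ((Gi i : Subgroup G) : Set G) ∉ ℬ)
    (hgen : ∀ i, ∃ B ∈ ℬ, Subgroup.closure B = Gi i)
    (hbasis : ∀ B ∈ ℬ, ∃ i, B ⊆ (Gi i : Set G))
    (m : ℕ)
    (hends : ∀ i, (Ends (inducedBornology ℬ (Gi i))).encard ≤ (m : ℕ∞)) :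
    (Ends ℬ).encard ≤ (m : ℕ∞) := by
  have hℬ : IsIdeal ℬ := ⟨fun S T hST hT => hsubset T S hST hT, ⟨{1}, hsingle 1⟩,
    fun S hS T hT => ⟨S ∪ T, hunion S hS T hT, subset_union_left, subset_union_right⟩⟩
  have huniv : univ ∉ ℬ := fun h => hunb 0 (hsubset _ _ (subset_univ _) h)
  obtain ⟨B₀, hB₀, hclB₀⟩ := hgen 0
  by_contra! hlt
  obtain ⟨t, hts, htm⟩ := exists_subset_encard_eq (Order.add_one_le_of_lt hlt)
  have : Finite t := finite_of_encard_eq_coe htm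
  obtain ⟨A, hAE, hdisj⟩ := exists_pairwise_disjoint_mem_ends (E := ((↑) : t → Set (Set G)))
    hℬ huniv (fun E => hts E.2) Subtype.val_injective
  have hA : ∀ E, A E ∉ ℬ ∧ CoarselyClopen ℬ (A E) := fun E => (hts E.2).1.1 _ (hAE E)
  choose k hk using fun E => exists_inter_notMem_of_basis hsingle hℬ hmul hbasis hB₀
    (hclB₀ ▸ hunb 0) (hA E).1 (hA E).2
  obtain ⟨K, hK⟩ := (directed_of_basis hℬ hgen hbasis).finite_le k
  have hAK : ∀ E, A E ∩ Gi K ∉ ℬ := fun E h =>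
    hk E (hsubset _ _ (inter_subset_inter_right _ (hK E)) h)
  have hcard := enatCard_le_encard_ends_inducedBornology hℬ (Gi K) hAK (fun E => (hA E).2) hdisj
  rw [ENat.card_coe_set_eq, htm] at hcard
  exact absurd (hcard.trans (hends K)) (by norm_cast; omega)

theorem ends_le_of_basis_subgroups_ends_le {G : Type*} [Group G] (ℬ : Set (Set G))
    (hsingle : ∀ g : G, {g} ∈ ℬ)
    (hsubset : ∀ S T : Set G, S ⊆ T → T ∈ ℬ → S ∈ ℬ)
    (hunion : ∀ S ∈ ℬ, ∀ T ∈ ℬ, S ∪ T ∈ ℬ)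
    (hmul : ∀ S ∈ ℬ, ∀ T ∈ ℬ, S * T ∈ ℬ)
    (hinv : ∀ S ∈ ℬ, S⁻¹ ∈ ℬ)
    (Gi : ℕ → Subgroup G)
    (hunb : ∀ i, ((Gi i : Subgroup G) : Set G) ∉ ℬ)
    (hgen : ∀ i, ∃ B ∈ ℬ, Subgroup.closure B = Gi i)
    (hbasis : ∀ B ∈ ℬ, ∃ i, B ⊆ (Gi i : Set G))
    (m : ℕ)
    (hends : ∀ i, (Ends (inducedBornology ℬ (Gi i))).encard ≤ (m : ℕ∞)) :
    (Ends ℬ).encard ≤ (m : ℕ∞) :=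
  ends_le_of_basis_subgroups_ends_le_general ℬ hsingle hsubset hunion hmul Gi hunb hgen hbasis m
    hends
end
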